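/- Let n ≥ 1 and q ≥ 2 be integers. Let B_0, …, B_n be nonnegative reals with B_0 = 1; set |C| := Σ_{j=0}^{n} B_j and define B_i^⊥ := (1/|C|) Σ_{j=0}^{n} B_j K_i(q;j) for 0 ≤ i ≤ n. Assume B_i^⊥ ≥ 0 and B_i^⊥ ≥ B_i for all 1 ≤ i ≤ n. Let h : {0,…,n} → ℝ be any function and let Z(x) = Σ_{i=0}^{n} z_i K_i(q;x) satisfy, for all 1 ≤ i ≤ n: (i) Z(i) ≤ h(i) and (ii) Z(i) − |C|·z_i ≥ 0. Then Σ_{i=0}^{n} (B_i^⊥ − B_i)·h(i) ≥ Z(0) − |C|·z_0. -/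

import Mathlib

/-- The `q`-ary Krawtchouk polynomial `K_t(q;x)` (with parameter `n`), evaluated at a
natural number `x`. -/
def kraw (n q t x : ℕ) : ℤ :=
  ∑ l ∈ Finset.range (t + 1),
    (-1 : ℤ) ^ l * (x.choose l) * ((n - x).choose (t - l)) * ((q : ℤ) - 1) ^ (t - l)

/-!
Weak LP duality. Writing `K` for the Krawtchouk kernel, the transform relation
`|C| B^⊥_t = ∑_j B_j K_t(j)` and the expansion `Z(x) = ∑_t z_t K_t(x)` give, after exchanging the
two sums, `∑_i B_i Z(i) = |C| ∑_t z_t B^⊥_t`. Hence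
`∑_i (B^⊥_i - B_i) Z(i) = ∑_i B^⊥_i (Z(i) - |C| z_i)`, whose `i = 0` term is `Z(0) - |C| z_0`
(as `K_0 ≡ 1` forces `B^⊥_0 = 1`) and whose other terms are nonnegative. On the left, the
`i = 0` term vanishes and the others only grow when `Z(i)` is replaced by `h(i) ≥ Z(i)`, since
`B^⊥_i ≥ B_i`.
-/

open Finset

theorem kraw_zero_left (n q x : ℕ) : kraw n q 0 x = 1 := by
  simp [kraw]

theorem le_sum_range_of_tail_nonneg {M : Type*} [AddCommMonoid M] [PartialOrder M]
    [IsOrderedAddMonoid M] {n : ℕ} {f : ℕ → M} (hf : ∀ i, 1 ≤ i → i ≤ n → 0 ≤ f i) :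
    f 0 ≤ ∑ i ∈ range (n + 1), f i := by
  rw [sum_range_succ']
  refine le_add_of_nonneg_left (sum_nonneg fun i hi => hf _ (by omega) ?_)
  exact Nat.succ_le_of_lt (mem_range.mp hi)

section Duality

variable {n : ℕ} {C : ℝ} {B Bperp z Z : ℕ → ℝ} {K : ℕ → ℕ → ℝ}

theorem sum_mul_eq_mul_sum_mul_dual
    (hBperp : ∀ t ≤ n, ∑ j ∈ range (n + 1), B j * K t j = C * Bperp t)
    (hZ : ∀ x ≤ n, Z x = ∑ t ∈ range (n + 1), z t * K t x) :
    ∑ i ∈ range (n + 1), B i * Z i = C * ∑ t ∈ range (n + 1), z t * Bperp t := by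
  calc ∑ i ∈ range (n + 1), B i * Z i
      = ∑ i ∈ range (n + 1), ∑ t ∈ range (n + 1), z t * (B i * K t i) := by
        refine sum_congr rfl fun i hi => ?_
        rw [hZ i (Nat.le_of_lt_succ (mem_range.mp hi)), mul_sum]
        exact sum_congr rfl fun t _ => by ring
    _ = ∑ t ∈ range (n + 1), z t * ∑ i ∈ range (n + 1), B i * K t i := by
        rw [sum_comm]
        simp only [mul_sum]
    _ = C * ∑ t ∈ range (n + 1), z t * Bperp t := by
        rw [mul_sum]
        refine sum_congr rfl fun t ht => ?_
        rw [hBperp t (Nat.le_of_lt_succ (mem_range.mp ht))]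
        ring

theorem sum_sub_mul_eq_sum_mul_sub_mul
    (hBperp : ∀ t ≤ n, ∑ j ∈ range (n + 1), B j * K t j = C * Bperp t)
    (hZ : ∀ x ≤ n, Z x = ∑ t ∈ range (n + 1), z t * K t x) :
    ∑ i ∈ range (n + 1), (Bperp i - B i) * Z i =
      ∑ i ∈ range (n + 1), Bperp i * (Z i - C * z i) := by
  simp only [sub_mul, mul_sub, sum_sub_distrib, sum_mul_eq_mul_sum_mul_dual hBperp hZ, mul_sum]
  congr 1
  exact sum_congr rfl fun i _ => by ring

end Duality

theorem key_polynomial_bound_primal_general (n q : ℕ)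
    (B : ℕ → ℝ) (hBnn : ∀ i, i ≤ n → 0 ≤ B i) (hB0 : B 0 = 1)
    (Ccard : ℝ) (hCcard : Ccard = ∑ j ∈ Finset.range (n + 1), B j)
    (Bperp : ℕ → ℝ)
    (hBperp : ∀ i, i ≤ n →
      Bperp i = (1 / Ccard) * ∑ j ∈ Finset.range (n + 1), B j * (kraw n q i j : ℝ))
    (hBperpnn : ∀ i, 1 ≤ i → i ≤ n → 0 ≤ Bperp i)
    (hdom : ∀ i, 1 ≤ i → i ≤ n → B i ≤ Bperp i)
    (h : ℕ → ℝ) (z : ℕ → ℝ) (Z : ℕ → ℝ)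
    (hZ : ∀ x, x ≤ n → Z x = ∑ i ∈ Finset.range (n + 1), z i * (kraw n q i x : ℝ))
    (hi : ∀ i, 1 ≤ i → i ≤ n → Z i ≤ h i)
    (hii : ∀ i, 1 ≤ i → i ≤ n → 0 ≤ Z i - Ccard * z i) :
    ∑ i ∈ Finset.range (n + 1), (Bperp i - B i) * h i ≥ Z 0 - Ccard * z 0 := by
  have hC : Ccard ≠ 0 := by
    refine (zero_lt_one.trans_le ?_).ne'
    rw [hCcard, ← hB0]
    exact single_le_sum (fun j hj => hBnn j (Nat.le_of_lt_succ (mem_range.mp hj))) (by simp)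
  have hdual : ∀ t ≤ n, ∑ j ∈ range (n + 1), B j * (kraw n q t j : ℝ) = Ccard * Bperp t := by
    intro t ht
    rw [hBperp t ht]
    field_simp
  have hBperp0 : Bperp 0 = 1 := by
    simp only [hBperp 0 n.zero_le, kraw_zero_left, Int.cast_one, mul_one, ← hCcard]
    exact one_div_mul_cancel hC
  calc Z 0 - Ccard * z 0 = Bperp 0 * (Z 0 - Ccard * z 0) := by rw [hBperp0, one_mul]
    _ ≤ ∑ i ∈ range (n + 1), Bperp i * (Z i - Ccard * z i) :=
        le_sum_range_of_tail_nonneg fun i hpos hle =>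
          mul_nonneg (hBperpnn i hpos hle) (hii i hpos hle)
    _ = ∑ i ∈ range (n + 1), (Bperp i - B i) * Z i :=
        (sum_sub_mul_eq_sum_mul_sub_mul hdual hZ).symm
    _ ≤ ∑ i ∈ range (n + 1), (Bperp i - B i) * h i := by
        refine sum_le_sum fun i hi' => ?_
        rcases Nat.eq_zero_or_pos i with rfl | hpos
        · simp [hBperp0, hB0]
        have hin := Nat.le_of_lt_succ (mem_range.mp hi')
        exact mul_le_mul_of_nonneg_left (hi i hpos hin) (sub_nonneg.mpr (hdom i hpos hin))

/-- Variant of the key polynomial bound: if `Z(i) ≤ h(i)` and `Z(i) - |C| z_i ≥ 0`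
for `1 ≤ i ≤ n`, then `∑_i (B_i^⊥ - B_i) h(i) ≥ Z(0) - |C| z_0`. -/
theorem key_polynomial_bound_primal (n q : ℕ) (hn : 1 ≤ n) (hq : 2 ≤ q)
    (B : ℕ → ℝ) (hBnn : ∀ i, i ≤ n → 0 ≤ B i) (hB0 : B 0 = 1)
    (Ccard : ℝ) (hCcard : Ccard = ∑ j ∈ Finset.range (n + 1), B j)
    (Bperp : ℕ → ℝ)
    (hBperp : ∀ i, i ≤ n →
      Bperp i = (1 / Ccard) * ∑ j ∈ Finset.range (n + 1), B j * (kraw n q i j : ℝ))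
    (hBperpnn : ∀ i, 1 ≤ i → i ≤ n → 0 ≤ Bperp i)
    (hdom : ∀ i, 1 ≤ i → i ≤ n → B i ≤ Bperp i)
    (h : ℕ → ℝ) (z : ℕ → ℝ) (Z : ℕ → ℝ)
    (hZ : ∀ x, x ≤ n → Z x = ∑ i ∈ Finset.range (n + 1), z i * (kraw n q i x : ℝ))
    (hi : ∀ i, 1 ≤ i → i ≤ n → Z i ≤ h i)
    (hii : ∀ i, 1 ≤ i → i ≤ n → 0 ≤ Z i - Ccard * z i) :
    ∑ i ∈ Finset.range (n + 1), (Bperp i - B i) * h i ≥ Z 0 - Ccard * z 0 :=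
  key_polynomial_bound_primal_general n q B hBnn hB0 Ccard hCcard Bperp hBperp hBperpnn hdom h z Z
    hZ hi hii
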